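/- Let H be a submonoid of ℕ^k with H ≠ {0} and let r ∈ ℕ⁺. Then r = ind H if and only if there exists a subset B of β(H) such that: (1) |B| = r; (2) the submonoid ⟨B⟩ generated by B is free, i.e., isomorphic as an additive monoid to ℕ^r; and (3) for every h ∈ β(H) \ B there exist c ∈ ℕ⁺ and f, g ∈ ⟨B⟩ with f + c·h = g. -/

import Mathlib

def coordFn {k : ℕ} (A : Set (Fin k → ℕ)) (i : Fin k) : A → ℚ :=
  fun f => ((f : Fin k → ℕ) i : ℚ)

def IndepOver {k : ℕ} (X : Finset (Fin k)) (A : Set (Fin k → ℕ)) : Prop :=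
  LinearIndependent ℚ (fun i : X => coordFn A i.1)

def MaxIndepOver {k : ℕ} (X : Finset (Fin k)) (A : Set (Fin k → ℕ)) : Prop :=
  IndepOver X A ∧ ∀ Y : Finset (Fin k), X ⊂ Y → ¬ IndepOver Y A

open Pointwise in
def beta {k : ℕ} (H : AddSubmonoid (Fin k → ℕ)) : Set (Fin k → ℕ) :=
  ((H : Set (Fin k → ℕ)) \ {0}) \
    (((H : Set (Fin k → ℕ)) \ {0}) + ((H : Set (Fin k → ℕ)) \ {0}))

def restrictHom {k : ℕ} (X : Finset (Fin k)) : (Fin k → ℕ) →+ (Fin X.card → ℕ) where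
  toFun h := fun j => h (X.orderIsoOfFin rfl j).1
  map_zero' := rfl
  map_add' _ _ := rfl

def IsoToSub {k : ℕ} (H : AddSubmonoid (Fin k → ℕ)) (r : ℕ) : Prop :=
  ∃ K : AddSubmonoid (Fin r → ℕ), Nonempty (H ≃+ K)

noncomputable def indOf {k : ℕ} (H : AddSubmonoid (Fin k → ℕ)) : ℕ :=
  sInf {r : ℕ | 1 ≤ r ∧ IsoToSub H r}


/-!
Let `d` be the dimension of the `ℚ`-span of `H` inside `ℚ^k`. Clearing denominators shows that a
family in `ℕ^k` is `ℕ`-linearly independent iff it is `ℚ`-linearly independent, so `d` is the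
largest size of an `ℕ`-independent family in `H`, which is an isomorphism invariant; on the other
hand some `d` coordinates already separate the points of the span, so `H` embeds in `ℕ^d`. Hence
`ind H = d`.

Since `β(H)` generates `H`, it contains a `ℚ`-basis `B` of the span; `B` generates a free monoid,
and condition (3) for `h` says exactly that `h` lies in the `ℚ`-span of `B`. Conversely, (3) puts
all of `β(H)`, hence `H`, in the span of `B`, so `d ≤ |B|`, while `⟨B⟩ ≅ ℕ^r` provides `r`
independent elements of `H`, so `r ≤ d`.
-/

open Submodule

section NatToRat

variable {ι κ : Type*}

def castToRat (ι : Type*) : (ι → ℕ) →ₗ[ℕ] (ι → ℚ) :=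
  LinearMap.compLeft (Nat.castAddMonoidHom ℚ).toNatLinearMap ι

@[simp]
lemma castToRat_apply (x : ι → ℕ) (i : ι) : castToRat ι x i = x i := rfl

lemma castToRat_injective : Function.Injective (castToRat ι) :=
  Nat.cast_injective.comp_left

lemma LinearIndependent.int_of_nat {M : Type*} [AddCommGroup M] {v : κ → M}
    (hv : LinearIndependent ℕ v) : LinearIndependent ℤ v := by
  classical
  rw [linearIndependent_iff']
  intro s z hz i hi
  have hpos_neg : ∑ j ∈ s, (z j).toNat • v j = ∑ j ∈ s, (-z j).toNat • v j := by
    rw [← sub_eq_zero, ← Finset.sum_sub_distrib, ← hz]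
    refine Finset.sum_congr rfl fun j _ => ?_
    rw [← natCast_zsmul, ← natCast_zsmul, ← sub_smul, Int.toNat_sub_toNat_neg]
  have := linearIndependent_iff'ₛ.mp hv s _ _ hpos_neg i hi
  omega

lemma linearIndependent_castToRat_iff {v : κ → ι → ℕ} :
    LinearIndependent ℚ (castToRat ι ∘ v) ↔ LinearIndependent ℕ v := by
  refine ⟨fun h => (h.restrict_scalars' ℕ).of_comp (castToRat ι), fun h => ?_⟩
  rw [← LinearIndependent.iff_fractionRing ℤ ℚ]
  exact (h.map_injOn (castToRat ι) castToRat_injective.injOn).int_of_nat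

lemma castToRat_image_closure (S : Set (ι → ℕ)) :
    castToRat ι '' AddSubmonoid.closure S = span ℕ (castToRat ι '' S) := by
  rw [← span_nat_eq_addSubmonoidClosure, span_image]
  rfl

lemma span_castToRat_image_closure (S : Set (ι → ℕ)) :
    span ℚ (castToRat ι '' AddSubmonoid.closure S) = span ℚ (castToRat ι '' S) := by
  rw [castToRat_image_closure, span_span_of_tower]

lemma exists_nsmul_mem_addSubgroupClosure_of_mem_span {V : Type*} [AddCommGroup V] [Module ℚ V]
    {T : Set V} {x : V} (hx : x ∈ span ℚ T) :
    ∃ c : ℕ, 0 < c ∧ c • x ∈ AddSubgroup.closure T := by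
  induction hx using span_induction with
  | mem x hx => exact ⟨1, one_pos, by simpa using AddSubgroup.subset_closure hx⟩
  | zero => exact ⟨1, one_pos, by simp⟩
  | add x y _ _ hx hy =>
    obtain ⟨a, ha, hax⟩ := hx
    obtain ⟨b, hb, hby⟩ := hy
    refine ⟨b * a, Nat.mul_pos hb ha, ?_⟩
    rw [smul_add, mul_smul, mul_comm, mul_smul]
    exact add_mem (nsmul_mem hax b) (nsmul_mem hby a)
  | smul q x _ hx =>
    obtain ⟨a, ha, hax⟩ := hx
    refine ⟨q.den * a, Nat.mul_pos q.den_pos ha, ?_⟩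
    have : (q.den * a) • (q • x) = q.num • (a • x) := by
      rw [mul_smul, smul_comm, ← Nat.cast_smul_eq_nsmul ℚ q.den (q • x), smul_smul,
        Rat.den_mul_eq_num, Int.cast_smul_eq_zsmul, smul_comm]
    rw [this]
    exact zsmul_mem hax _

lemma exists_add_castToRat_eq_of_mem_addSubgroupClosure {S : Set (ι → ℕ)} {y : ι → ℚ}
    (hy : y ∈ AddSubgroup.closure (castToRat ι '' S)) :
    ∃ f ∈ AddSubmonoid.closure S, ∃ g ∈ AddSubmonoid.closure S,
      castToRat ι f + y = castToRat ι g := by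
  induction hy using AddSubgroup.closure_induction with
  | mem y hy =>
    obtain ⟨s, hs, rfl⟩ := hy
    exact ⟨0, zero_mem _, s, AddSubmonoid.subset_closure hs, by simp⟩
  | zero => exact ⟨0, zero_mem _, 0, zero_mem _, by simp⟩
  | add y z _ _ hy hz =>
    obtain ⟨f, hf, g, hg, hfg⟩ := hy
    obtain ⟨f', hf', g', hg', hfg'⟩ := hz
    refine ⟨f + f', add_mem hf hf', g + g', add_mem hg hg', ?_⟩
    rw [map_add, map_add, ← hfg, ← hfg']
    abel
  | neg y _ hy =>
    obtain ⟨f, hf, g, hg, hfg⟩ := hy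
    exact ⟨g, hg, f, hf, by rw [← hfg]; abel⟩

theorem castToRat_mem_span_iff {S : Set (ι → ℕ)} {h : ι → ℕ} :
    castToRat ι h ∈ span ℚ (castToRat ι '' S) ↔
      ∃ c : ℕ, 0 < c ∧
        ∃ f ∈ AddSubmonoid.closure S, ∃ g ∈ AddSubmonoid.closure S, f + c • h = g := by
  constructor
  · intro hh
    obtain ⟨c, hc, hch⟩ := exists_nsmul_mem_addSubgroupClosure_of_mem_span hh
    obtain ⟨f, hf, g, hg, hfg⟩ := exists_add_castToRat_eq_of_mem_addSubgroupClosure hch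
    exact ⟨c, hc, f, hf, g, hg, castToRat_injective (by rwa [map_add, map_nsmul])⟩
  · rintro ⟨c, hc, f, hf, g, hg, rfl⟩
    have hmem : ∀ x ∈ AddSubmonoid.closure S, castToRat ι x ∈ span ℚ (castToRat ι '' S) :=
      fun x hx => span_castToRat_image_closure S ▸ subset_span ⟨x, hx, rfl⟩
    have hsub := sub_mem (hmem _ hg) (hmem f hf)
    rw [map_add, add_sub_cancel_left, map_nsmul, ← Nat.cast_smul_eq_nsmul ℚ] at hsub
    exact (smul_mem_iff _ (Nat.cast_ne_zero.mpr hc.ne')).mp hsub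

end NatToRat

section FreeAddMonoid

variable {M N κ : Type*} [AddCommMonoid M] [AddCommMonoid N]

lemma AddSubmonoid.linearIndependent_coe_iff {S : AddSubmonoid M} {v : κ → S} :
    LinearIndependent ℕ (fun i => (v i : M)) ↔ LinearIndependent ℕ v :=
  ⟨.of_comp S.subtype.toNatLinearMap,
    fun h => h.map_injOn S.subtype.toNatLinearMap Subtype.val_injective.injOn⟩

lemma AddEquiv.linearIndependent_nat_comp (e : M ≃+ N) {v : κ → M} (hv : LinearIndependent ℕ v) :
    LinearIndependent ℕ (e ∘ v) :=
  hv.map_injOn e.toNatLinearEquiv.toLinearMap e.injective.injOn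

lemma nonempty_closure_addEquiv_of_linearIndependent {B : Finset M}
    (hB : LinearIndependent ℕ ((↑) : B → M)) :
    Nonempty (AddSubmonoid.closure (B : Set M) ≃+ (Fin B.card → ℕ)) := by
  have hspan : (span ℕ (Set.range ((↑) : B → M))).toAddSubmonoid =
      AddSubmonoid.closure (B : Set M) := by
    rw [span_nat_eq_addSubmonoidClosure, Subtype.range_coe]
  exact ⟨(AddEquiv.addSubmonoidCongr hspan.symm).trans
    ((Module.Basis.span hB).reindex B.equivFin).equivFun.toAddEquiv⟩

lemma linearIndependent_addEquiv_symm_single {S : AddSubmonoid M} {r : ℕ}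
    (e : S ≃+ (Fin r → ℕ)) :
    LinearIndependent ℕ (fun j => (e.symm (Pi.single j 1) : M)) :=
  AddSubmonoid.linearIndependent_coe_iff.mpr <| by
    convert ((Pi.basisFun ℕ (Fin r)).map e.symm.toNatLinearEquiv).linearIndependent
    simp

end FreeAddMonoid

section RatRank

variable {ι κ : Type*} [Fintype ι]

noncomputable def ratRank (H : AddSubmonoid (ι → ℕ)) : ℕ :=
  Module.finrank ℚ (span ℚ (castToRat ι '' H))

lemma ratRank_le (H : AddSubmonoid (ι → ℕ)) : ratRank H ≤ Fintype.card ι :=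
  (finrank_le _).trans_eq (Module.finrank_fintype_fun_eq_card ℚ)

lemma ratRank_pos {H : AddSubmonoid (ι → ℕ)} (hH : H ≠ ⊥) : 0 < ratRank H := by
  obtain ⟨x, hx, hx0⟩ := H.bot_or_exists_ne_zero.resolve_left hH
  refine Module.finrank_pos_iff_exists_ne_zero.mpr
    ⟨⟨castToRat ι x, subset_span ⟨x, hx, rfl⟩⟩, fun h => hx0 (castToRat_injective ?_)⟩
  rw [map_zero]
  exact congrArg Subtype.val h

lemma card_le_ratRank [Fintype κ] {H : AddSubmonoid (ι → ℕ)} {v : κ → ι → ℕ}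
    (hv : LinearIndependent ℕ v) (hvH : ∀ j, v j ∈ H) : Fintype.card κ ≤ ratRank H := by
  rw [← finrank_span_eq_card (linearIndependent_castToRat_iff.mpr hv)]
  exact finrank_mono (span_mono (Set.range_subset_iff.mpr fun j => ⟨v j, hvH j, rfl⟩))

end RatRank

theorem Submodule.exists_finset_card_eq_finrank_separating {K ι : Type*} [Field K]
    [Fintype ι] (V : Submodule K (ι → K)) :
    ∃ X : Finset ι, X.card = Module.finrank K V ∧ ∀ v ∈ V, (∀ i ∈ X, v i = 0) → v = 0 := by
  classical
  let φ : ι → Module.Dual K V := fun i => V.subtype.dualMap ((Pi.basisFun K ι).coord i)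
  -- the coordinate functionals span `V*` because every functional on `V` extends to `K^ι`
  have hφ : span K (Set.range φ) = ⊤ := by
    rw [show Set.range φ = V.subtype.dualMap '' Set.range (Pi.basisFun K ι).coord from
      Set.range_comp _ _, span_image, ← (Pi.basisFun K ι).coe_dualBasis,
      (Pi.basisFun K ι).dualBasis.span_eq, map_top, LinearMap.range_eq_top.mpr
      (LinearMap.dualMap_surjective_of_injective V.injective_subtype)]
  obtain ⟨κ, a, ha, hspan, hli⟩ := exists_linearIndependent' K φ
  have := hli.finite
  have := Fintype.ofFinite κ
  refine ⟨Finset.univ.map ⟨a, ha⟩, ?_, fun v hv hX => ?_⟩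
  · rw [Finset.card_map, Finset.card_univ, ← finrank_span_eq_card hli, hspan, hφ, finrank_top,
      Subspace.dual_finrank_eq]
  · have hker : span K (Set.range (φ ∘ a)) ≤ LinearMap.ker (Module.Dual.eval K V ⟨v, hv⟩) := by
      rw [span_le]
      rintro _ ⟨j, rfl⟩
      simpa [φ] using hX (a j) (by simp)
    have hall : ∀ i, φ i ⟨v, hv⟩ = 0 := fun i =>
      hker (hspan ▸ subset_span (Set.mem_range_self i))
    funext i
    simpa [φ] using hall i

section Beta

open Pointwise

variable {k : ℕ}

lemma beta_subset (H : AddSubmonoid (Fin k → ℕ)) : beta H ⊆ H := fun _ hx => hx.1.1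

lemma closure_beta (H : AddSubmonoid (Fin k → ℕ)) : AddSubmonoid.closure (beta H) = H := by
  refine le_antisymm (AddSubmonoid.closure_le.mpr (beta_subset H)) fun h hh => ?_
  induction h using WellFoundedLT.induction with
  | _ h ih =>
  by_cases h0 : h = 0
  · exact h0 ▸ zero_mem _
  by_cases hβ : h ∈ beta H
  · exact AddSubmonoid.subset_closure hβ
  obtain ⟨a, ⟨ha, ha0⟩, b, ⟨hb, hb0⟩, rfl⟩ :
      h ∈ ((H : Set (Fin k → ℕ)) \ {0}) + ((H : Set (Fin k → ℕ)) \ {0}) := by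
    simpa [beta, hh, h0] using hβ
  exact add_mem (ih a (lt_add_of_pos_right a (pos_iff_ne_zero.mpr hb0)) ha)
    (ih b (lt_add_of_pos_left b (pos_iff_ne_zero.mpr ha0)) hb)

lemma span_castToRat_image_beta (H : AddSubmonoid (Fin k → ℕ)) :
    span ℚ (castToRat _ '' beta H) = span ℚ (castToRat _ '' H) := by
  rw [← span_castToRat_image_closure, closure_beta]

end Beta

section Index

variable {k : ℕ}

lemma exists_finset_subset_beta (H : AddSubmonoid (Fin k → ℕ)) :
    ∃ B : Finset (Fin k → ℕ), (B : Set (Fin k → ℕ)) ⊆ beta H ∧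
      LinearIndependent ℕ ((↑) : B → Fin k → ℕ) ∧
      span ℚ (castToRat (Fin k) '' B) = span ℚ (castToRat (Fin k) '' H) ∧ B.card = ratRank H := by
  obtain ⟨t, hts, hspan, hli⟩ := exists_linearIndependent ℚ (castToRat (Fin k) '' beta H)
  have hfin : (castToRat (Fin k) ⁻¹' t).Finite := hli.setFinite.preimage castToRat_injective.injOn
  have himage : castToRat (Fin k) '' (castToRat (Fin k) ⁻¹' t) = t :=
    Set.image_preimage_eq_of_subset (hts.trans (Set.image_subset_range _ _))
  have hBspan : span ℚ (castToRat (Fin k) '' hfin.toFinset) = span ℚ (castToRat (Fin k) '' H) := by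
    rw [Set.Finite.coe_toFinset, himage, hspan, span_castToRat_image_beta]
  have hBli : LinearIndepOn ℚ (castToRat (Fin k)) (hfin.toFinset : Set (Fin k → ℕ)) := by
    rw [Set.Finite.coe_toFinset, linearIndepOn_iff_image castToRat_injective.injOn, himage]
    exact hli
  refine ⟨hfin.toFinset, fun x hx => ?_, linearIndependent_castToRat_iff.mp hBli, hBspan, ?_⟩
  · obtain ⟨y, hy, hyx⟩ := hts (by simpa using hx)
    exact castToRat_injective hyx ▸ hy
  · rw [ratRank, ← hBspan, Set.image_eq_range, finrank_span_eq_card hBli]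
    simp

lemma ratRank_le_of_addEquiv {r : ℕ} {H : AddSubmonoid (Fin k → ℕ)}
    {K : AddSubmonoid (Fin r → ℕ)} (e : H ≃+ K) : ratRank H ≤ ratRank K := by
  obtain ⟨B, hBβ, hBli, -, hBcard⟩ := exists_finset_subset_beta H
  let v : B → H := fun x => ⟨x, beta_subset H (hBβ x.2)⟩
  have hv : LinearIndependent ℕ v := AddSubmonoid.linearIndependent_coe_iff.mp hBli
  rw [← hBcard, ← Fintype.card_coe]
  exact card_le_ratRank
    (AddSubmonoid.linearIndependent_coe_iff.mpr (e.linearIndependent_nat_comp hv))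
    fun x => (e (v x)).2

lemma restrictHom_apply_eq {X : Finset (Fin k)} {x y : Fin k → ℕ}
    (hxy : restrictHom X x = restrictHom X y) {i : Fin k} (hi : i ∈ X) : x i = y i := by
  have := congrFun hxy ((X.orderIsoOfFin rfl).symm ⟨i, hi⟩)
  change x (X.orderIsoOfFin rfl _).1 = y (X.orderIsoOfFin rfl _).1 at this
  rwa [OrderIso.apply_symm_apply] at this

lemma isoToSub_of_injOn {H : AddSubmonoid (Fin k → ℕ)} {X : Finset (Fin k)}
    (hX : Set.InjOn (restrictHom X) H) : IsoToSub H X.card :=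
  ⟨_, ⟨AddEquiv.ofBijective ((restrictHom X).addSubmonoidMap H)
    ⟨fun a b hab => Subtype.ext (hX a.2 b.2 (congrArg Subtype.val hab)),
      (restrictHom X).addSubmonoidMap_surjective H⟩⟩⟩

lemma isoToSub_ratRank (H : AddSubmonoid (Fin k → ℕ)) : IsoToSub H (ratRank H) := by
  obtain ⟨X, hXcard, hX⟩ :=
    (span ℚ (castToRat (Fin k) '' H)).exists_finset_card_eq_finrank_separating
  rw [ratRank, ← hXcard]
  refine isoToSub_of_injOn fun x hx y hy hxy => castToRat_injective (sub_eq_zero.mp ?_)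
  refine hX _ (sub_mem (subset_span ⟨x, hx, rfl⟩) (subset_span ⟨y, hy, rfl⟩)) fun i hi => ?_
  simp [restrictHom_apply_eq hxy hi]

theorem indOf_eq_ratRank {H : AddSubmonoid (Fin k → ℕ)} (hH : H ≠ ⊥) : indOf H = ratRank H := by
  have hmem : ratRank H ∈ {r | 1 ≤ r ∧ IsoToSub H r} := ⟨ratRank_pos hH, isoToSub_ratRank H⟩
  refine le_antisymm (Nat.sInf_le hmem) (le_csInf ⟨_, hmem⟩ ?_)
  rintro r ⟨-, K, ⟨e⟩⟩
  exact (ratRank_le_of_addEquiv e).trans ((ratRank_le K).trans_eq (Fintype.card_fin r))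

lemma ratRank_le_card {H : AddSubmonoid (Fin k → ℕ)} {B : Finset (Fin k → ℕ)}
    (hB : ∀ h ∈ beta H, castToRat (Fin k) h ∈ span ℚ (castToRat (Fin k) '' B)) :
    ratRank H ≤ B.card :=
  calc ratRank H ≤ Module.finrank ℚ (span ℚ (castToRat (Fin k) '' B)) := by
        refine finrank_mono ?_
        rw [← span_castToRat_image_beta, span_le]
        rintro _ ⟨h, hh, rfl⟩
        exact hB h hh
    _ ≤ B.card := by
        rw [← Finset.coe_image]
        exact (finrank_span_finset_le_card _).trans Finset.card_image_le

end Index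

theorem statement11_general {k : ℕ} (H : AddSubmonoid (Fin k → ℕ)) (hH : H ≠ ⊥)
    (r : ℕ) :
    r = indOf H ↔
      ∃ B : Finset (Fin k → ℕ), (B : Set (Fin k → ℕ)) ⊆ beta H ∧
        B.card = r ∧
        Nonempty (AddSubmonoid.closure (B : Set (Fin k → ℕ)) ≃+ (Fin r → ℕ)) ∧
        ∀ h ∈ beta H \ (B : Set (Fin k → ℕ)), ∃ c : ℕ, 0 < c ∧
          ∃ f ∈ AddSubmonoid.closure (B : Set (Fin k → ℕ)),
            ∃ g ∈ AddSubmonoid.closure (B : Set (Fin k → ℕ)), f + c • h = g := by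
  rw [indOf_eq_ratRank hH]
  constructor
  · rintro rfl
    obtain ⟨B, hBβ, hBli, hBspan, hBcard⟩ := exists_finset_subset_beta H
    refine ⟨B, hBβ, hBcard, hBcard ▸ nonempty_closure_addEquiv_of_linearIndependent hBli,
      fun h hh => castToRat_mem_span_iff.mp ?_⟩
    rw [hBspan]
    exact subset_span ⟨h, beta_subset H hh.1, rfl⟩
  · rintro ⟨B, hBβ, rfl, ⟨e⟩, hB⟩
    refine le_antisymm ?_ (ratRank_le_card fun h hh => ?_)
    · have hBH : AddSubmonoid.closure (B : Set (Fin k → ℕ)) ≤ H :=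
        AddSubmonoid.closure_le.mpr (hBβ.trans (beta_subset H))
      simpa using card_le_ratRank (linearIndependent_addEquiv_symm_single e)
        fun j => hBH (e.symm (Pi.single j 1)).2
    · by_cases hhB : h ∈ B
      · exact subset_span ⟨h, hhB, rfl⟩
      · exact castToRat_mem_span_iff.mpr (hB h ⟨hh, hhB⟩)

theorem statement11 {k : ℕ} (hk : 0 < k) (H : AddSubmonoid (Fin k → ℕ)) (hH : H ≠ ⊥)
    (r : ℕ) (hr : 1 ≤ r) :
    r = indOf H ↔
      ∃ B : Finset (Fin k → ℕ), (B : Set (Fin k → ℕ)) ⊆ beta H ∧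
        B.card = r ∧
        Nonempty (AddSubmonoid.closure (B : Set (Fin k → ℕ)) ≃+ (Fin r → ℕ)) ∧
        ∀ h ∈ beta H \ (B : Set (Fin k → ℕ)), ∃ c : ℕ, 0 < c ∧
          ∃ f ∈ AddSubmonoid.closure (B : Set (Fin k → ℕ)),
            ∃ g ∈ AddSubmonoid.closure (B : Set (Fin k → ℕ)), f + c • h = g :=
  statement11_general H hH r
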